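/- Let U ⊆ ℝ^m be an open set and φ = (φ^1, …, φ^n) : U → ℝ^n a smooth map which is horizontally weakly conformal with dilation λ (so ⟨∇φ^α, ∇φ^β⟩ = λ² δ_{αβ} with λ² = |∇φ^1|² smooth), each component φ^α biharmonic, and such that φ^α·φ^β and (φ^α)² − (φ^β)² are biharmonic for all α ≠ β. Then for every open set V ⊆ ℝ^n and every smooth function f : V → ℝ, on φ^{-1}(V) one has Δ²(f ∘ φ) = λ⁴ (Δ²f) ∘ φ + 2 Σ_{α=1}^{n} [λ² Δφ^α + ⟨∇(λ²), ∇φ^α⟩] · ((∂_α Δf) ∘ φ) + [Δ(λ²) + 2⟨∇φ^1, ∇Δφ^1⟩ + (Δφ^1)²] · ((Δf) ∘ φ), where Δ² = Δ ∘ Δ and ∂_α Δf denotes the α-th partial derivative of Δf. -/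

import Mathlib

open scoped BigOperators RealInnerProductSpace

noncomputable section

/-- `m`-dimensional Euclidean space. -/
abbrev E (m : ℕ) := EuclideanSpace ℝ (Fin m)

/-- The Euclidean Laplacian of a real-valued function: the sum of the second
partial derivatives in the coordinate directions. -/
noncomputable def lap {m : ℕ} (f : E m → ℝ) (x : E m) : ℝ :=
  ∑ i : Fin m,
    fderiv ℝ (fun y => fderiv ℝ f y (EuclideanSpace.single i 1)) x (EuclideanSpace.single i 1)

/-- The Euclidean Laplacian of a complex-valued function (applied componentwise). -/
noncomputable def lapC {m : ℕ} (f : E m → ℂ) (x : E m) : ℂ :=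
  ∑ i : Fin m,
    fderiv ℝ (fun y => fderiv ℝ f y (EuclideanSpace.single i 1)) x (EuclideanSpace.single i 1)

/-- A (smooth) harmonic function on a set: `Δ f = 0` there. -/
def HarmonicOn {m : ℕ} (f : E m → ℝ) (s : Set (E m)) : Prop :=
  ContDiffOn ℝ (⊤ : ℕ∞) f s ∧ ∀ x ∈ s, lap f x = 0

/-- A (smooth) biharmonic function on a set: `Δ (Δ f) = 0` there. -/
def BiharmonicOn {m : ℕ} (f : E m → ℝ) (s : Set (E m)) : Prop :=
  ContDiffOn ℝ (⊤ : ℕ∞) f s ∧ ∀ x ∈ s, lap (lap f) x = 0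

/-- A generalized harmonic morphism on `U`: it pulls back every harmonic function on an
open set `V` of the target to a biharmonic function on `U ∩ φ ⁻¹' V`. -/
def IsGHM {m n : ℕ} (φ : E m → E n) (U : Set (E m)) : Prop :=
  ∀ V : Set (E n), IsOpen V → ∀ f : E n → ℝ, HarmonicOn f V →
    BiharmonicOn (f ∘ φ) (U ∩ φ ⁻¹' V)

/-- A harmonic morphism on `U`: it pulls back harmonic functions to harmonic functions. -/
def IsHM {m n : ℕ} (φ : E m → E n) (U : Set (E m)) : Prop :=
  ∀ V : Set (E n), IsOpen V → ∀ f : E n → ℝ, HarmonicOn f V →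
    HarmonicOn (f ∘ φ) (U ∩ φ ⁻¹' V)

/-- A biharmonic morphism on `U`: it pulls back biharmonic functions to biharmonic
functions. -/
def IsBHM {m n : ℕ} (φ : E m → E n) (U : Set (E m)) : Prop :=
  ∀ V : Set (E n), IsOpen V → ∀ f : E n → ℝ, BiharmonicOn f V →
    BiharmonicOn (f ∘ φ) (U ∩ φ ⁻¹' V)

/-- Horizontally weakly conformal on `U`: there is `λ : U → [0,∞)` with
`⟪∇φ^α, ∇φ^β⟫ = λ² δ_{αβ}` pointwise on `U`. -/
def IsHWC {m n : ℕ} (φ : E m → E n) (U : Set (E m)) : Prop :=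
  ∃ lam : E m → ℝ, (∀ x, 0 ≤ lam x) ∧
    ∀ x ∈ U, ∀ α β : Fin n,
      ⟪gradient (fun y => φ y α) x, gradient (fun y => φ y β) x⟫ =
        (lam x) ^ 2 * (if α = β then 1 else 0)

open scoped ContDiff

namespace S5
variable {m n : ℕ}

noncomputable def pd (i : Fin m) (g : E m → ℝ) : E m → ℝ :=
  fun y => fderiv ℝ g y (EuclideanSpace.single i 1)

theorem lap_eq_pd (g : E m → ℝ) (x : E m) : lap g x = ∑ i, pd i (pd i g) x := rfl

theorem lap_fun_eq (g : E m → ℝ) : lap g = fun x => ∑ i, pd i (pd i g) x := rfl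

theorem diffAt {s : Set (E m)} (hs : IsOpen s) {g : E m → ℝ} (hg : ContDiffOn ℝ ∞ g s)
    {x : E m} (hx : x ∈ s) : DifferentiableAt ℝ g x :=
  ((hg.differentiableOn (by simp)).differentiableAt (hs.mem_nhds hx))

theorem pd_smooth {s : Set (E m)} (hs : IsOpen s) {g : E m → ℝ}
    (hg : ContDiffOn ℝ ∞ g s) (i : Fin m) : ContDiffOn ℝ ∞ (pd i g) s := by
  have h1 : ContDiffOn ℝ ∞ (fderiv ℝ g) s := hg.fderiv_of_isOpen hs (by simp)
  exact h1.clm_apply contDiffOn_const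

theorem lap_smooth {s : Set (E m)} (hs : IsOpen s) {g : E m → ℝ}
    (hg : ContDiffOn ℝ ∞ g s) : ContDiffOn ℝ ∞ (lap g) s := by
  rw [lap_fun_eq]
  exact ContDiffOn.sum (fun i _ => pd_smooth hs (pd_smooth hs hg i) i)

theorem pd_congr {s : Set (E m)} (hs : IsOpen s) {g h : E m → ℝ}
    (hgh : ∀ y ∈ s, g y = h y) {x : E m} (hx : x ∈ s) (i : Fin m) :
    pd i g x = pd i h x := by
  have : g =ᶠ[nhds x] h := Filter.eventuallyEq_of_mem (hs.mem_nhds hx) hgh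
  unfold pd
  rw [this.fderiv_eq]

theorem lap_congr {s : Set (E m)} (hs : IsOpen s) {g h : E m → ℝ}
    (hgh : ∀ y ∈ s, g y = h y) {x : E m} (hx : x ∈ s) :
    lap g x = lap h x := by
  rw [lap_eq_pd, lap_eq_pd]
  refine Finset.sum_congr rfl fun i _ => ?_
  exact pd_congr hs (fun y hy => pd_congr hs hgh hy i) hx i

theorem pd_add {u v : E m → ℝ} {x : E m} (hu : DifferentiableAt ℝ u x)
    (hv : DifferentiableAt ℝ v x) (i : Fin m) :
    pd i (fun y => u y + v y) x = pd i u x + pd i v x := by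
  unfold pd; rw [fderiv_fun_add hu hv]; rfl

theorem pd_sub {u v : E m → ℝ} {x : E m} (hu : DifferentiableAt ℝ u x)
    (hv : DifferentiableAt ℝ v x) (i : Fin m) :
    pd i (fun y => u y - v y) x = pd i u x - pd i v x := by
  unfold pd; rw [fderiv_fun_sub hu hv]; rfl

theorem pd_mul {u v : E m → ℝ} {x : E m} (hu : DifferentiableAt ℝ u x)
    (hv : DifferentiableAt ℝ v x) (i : Fin m) :
    pd i (fun y => u y * v y) x = u x * pd i v x + v x * pd i u x := by
  unfold pd; rw [fderiv_fun_mul hu hv]; rfl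

theorem pd_const_mul {v : E m → ℝ} {x : E m} (hv : DifferentiableAt ℝ v x) (c : ℝ) (i : Fin m) :
    pd i (fun y => c * v y) x = c * pd i v x := by
  unfold pd; rw [fderiv_const_mul hv]; rfl

theorem pd_sum {ι : Type*} (t : Finset ι) {F : ι → E m → ℝ} {x : E m}
    (hF : ∀ j ∈ t, DifferentiableAt ℝ (F j) x) (i : Fin m) :
    pd i (fun y => ∑ j ∈ t, F j y) x = ∑ j ∈ t, pd i (F j) x := by
  unfold pd; rw [fderiv_fun_sum hF]; simp

theorem grad_inner (f : E m → ℝ) (x w : E m) :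
    ⟪gradient f x, w⟫ = fderiv ℝ f x w := by
  rw [gradient]
  exact InnerProductSpace.toDual_symm_apply (E := E m) (𝕜 := ℝ)

theorem grad_coord (g : E m → ℝ) (x : E m) (i : Fin m) :
    gradient g x i = pd i g x := by
  have h := grad_inner g x (EuclideanSpace.single i 1)
  rw [EuclideanSpace.inner_single_right] at h
  unfold pd; rw [← h]; simp

theorem inner_grad_grad (u v : E m → ℝ) (x : E m) :
    ⟪gradient u x, gradient v x⟫ = ∑ i, pd i u x * pd i v x := by
  rw [PiLp.inner_apply]
  simp [RCLike.inner_apply, grad_coord]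
  exact Finset.sum_congr rfl fun i _ => mul_comm _ _


theorem lap_add {s : Set (E m)} (hs : IsOpen s) {u v : E m → ℝ}
    (hu : ContDiffOn ℝ ∞ u s) (hv : ContDiffOn ℝ ∞ v s) {x : E m} (hx : x ∈ s) :
    lap (fun y => u y + v y) x = lap u x + lap v x := by
  rw [lap_eq_pd, lap_eq_pd, lap_eq_pd, ← Finset.sum_add_distrib]
  refine Finset.sum_congr rfl fun i _ => ?_
  have h1 : ∀ y ∈ s, pd i (fun y => u y + v y) y = pd i u y + pd i v y :=
    fun y hy => pd_add (diffAt hs hu hy) (diffAt hs hv hy) i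
  rw [pd_congr hs h1 hx i]
  exact pd_add (diffAt hs (pd_smooth hs hu i) hx) (diffAt hs (pd_smooth hs hv i) hx) i

theorem lap_sub {s : Set (E m)} (hs : IsOpen s) {u v : E m → ℝ}
    (hu : ContDiffOn ℝ ∞ u s) (hv : ContDiffOn ℝ ∞ v s) {x : E m} (hx : x ∈ s) :
    lap (fun y => u y - v y) x = lap u x - lap v x := by
  rw [lap_eq_pd, lap_eq_pd, lap_eq_pd, ← Finset.sum_sub_distrib]
  refine Finset.sum_congr rfl fun i _ => ?_
  have h1 : ∀ y ∈ s, pd i (fun y => u y - v y) y = pd i u y - pd i v y :=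
    fun y hy => pd_sub (diffAt hs hu hy) (diffAt hs hv hy) i
  rw [pd_congr hs h1 hx i]
  exact pd_sub (diffAt hs (pd_smooth hs hu i) hx) (diffAt hs (pd_smooth hs hv i) hx) i

theorem lap_const_mul {s : Set (E m)} (hs : IsOpen s) {v : E m → ℝ}
    (hv : ContDiffOn ℝ ∞ v s) {x : E m} (hx : x ∈ s) (c : ℝ) :
    lap (fun y => c * v y) x = c * lap v x := by
  rw [lap_eq_pd, lap_eq_pd, Finset.mul_sum]
  refine Finset.sum_congr rfl fun i _ => ?_
  have h1 : ∀ y ∈ s, pd i (fun y => c * v y) y = c * pd i v y :=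
    fun y hy => pd_const_mul (diffAt hs hv hy) c i
  rw [pd_congr hs h1 hx i]
  exact pd_const_mul (diffAt hs (pd_smooth hs hv i) hx) c i

theorem lap_sum {s : Set (E m)} (hs : IsOpen s) {ι : Type*} (t : Finset ι) {F : ι → E m → ℝ}
    (hF : ∀ j ∈ t, ContDiffOn ℝ ∞ (F j) s) {x : E m} (hx : x ∈ s) :
    lap (fun y => ∑ j ∈ t, F j y) x = ∑ j ∈ t, lap (F j) x := by
  rw [lap_eq_pd]
  have key : ∀ i : Fin m, pd i (pd i fun y => ∑ j ∈ t, F j y) x = ∑ j ∈ t, pd i (pd i (F j)) x := by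
    intro i
    have h1 : ∀ y ∈ s, pd i (fun y => ∑ j ∈ t, F j y) y = ∑ j ∈ t, pd i (F j) y :=
      fun y hy => pd_sum t (fun j hj => diffAt hs (hF j hj) hy) i
    rw [pd_congr hs h1 hx i]
    exact pd_sum t (fun j hj => diffAt hs (pd_smooth hs (hF j hj) i) hx) i
  simp only [key]
  rw [Finset.sum_comm]
  exact Finset.sum_congr rfl fun j _ => (lap_eq_pd (F j) x).symm

theorem lap_mul {s : Set (E m)} (hs : IsOpen s) {u v : E m → ℝ}
    (hu : ContDiffOn ℝ ∞ u s) (hv : ContDiffOn ℝ ∞ v s) {x : E m} (hx : x ∈ s) :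
    lap (fun y => u y * v y) x =
      u x * lap v x + 2 * ∑ i, pd i u x * pd i v x + v x * lap u x := by
  have key : ∀ i : Fin m, pd i (pd i (fun y => u y * v y)) x =
      u x * pd i (pd i v) x + 2 * (pd i u x * pd i v x) + v x * pd i (pd i u) x := by
    intro i
    have h1 : ∀ y ∈ s, pd i (fun y => u y * v y) y = u y * pd i v y + v y * pd i u y :=
      fun y hy => pd_mul (diffAt hs hu hy) (diffAt hs hv hy) i
    rw [pd_congr hs h1 hx i]
    have hdu := diffAt hs hu hx
    have hdv := diffAt hs hv hx
    have hdpu := diffAt hs (pd_smooth hs hu i) hx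
    have hdpv := diffAt hs (pd_smooth hs hv i) hx
    rw [pd_add (u := fun y => u y * pd i v y) (v := fun y => v y * pd i u y) (hdu.mul hdpv) (hdv.mul hdpu) i, pd_mul hdu hdpv i, pd_mul hdv hdpu i]
    ring
  rw [lap_eq_pd]
  simp only [key]
  rw [Finset.sum_add_distrib, Finset.sum_add_distrib, ← Finset.mul_sum, ← Finset.mul_sum,
    ← Finset.mul_sum, lap_eq_pd, lap_eq_pd]


/-- Expansion of a continuous linear functional on Euclidean space in coordinates. -/
theorem clm_expand (L : E n →L[ℝ] ℝ) (v : E n) :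
    L v = ∑ α, v α * L (EuclideanSpace.single α 1) := by
  have hv : v = ∑ α, v α • EuclideanSpace.single α (1 : ℝ) := by
    have h := (EuclideanSpace.basisFun (Fin n) ℝ).sum_repr v
    simp only [EuclideanSpace.basisFun_apply, EuclideanSpace.basisFun_repr] at h
    exact h.symm
  conv_lhs => rw [hv]
  rw [map_sum]
  simp [smul_eq_mul]

theorem pd_coord {φ : E m → E n} {y : E m} (hφ : DifferentiableAt ℝ φ y) (i : Fin m) (α : Fin n) :
    fderiv ℝ φ y (EuclideanSpace.single i 1) α = pd i (fun z => φ z α) y := by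
  have h : (fun z => φ z α) = (EuclideanSpace.proj α : E n →L[ℝ] ℝ) ∘ φ := rfl
  unfold pd
  rw [h, fderiv_comp y (EuclideanSpace.proj α).differentiableAt hφ,
    ContinuousLinearMap.fderiv]
  rfl

/-- First-order chain rule in coordinates. -/
theorem pd_comp {f : E n → ℝ} {φ : E m → E n} {y : E m}
    (hf : DifferentiableAt ℝ f (φ y)) (hφ : DifferentiableAt ℝ φ y) (i : Fin m) :
    pd i (f ∘ φ) y = ∑ α, pd α f (φ y) * pd i (fun z => φ z α) y := by
  show fderiv ℝ (f ∘ φ) y (EuclideanSpace.single i 1) = _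
  rw [fderiv_comp y hf hφ]
  show fderiv ℝ f (φ y) (fderiv ℝ φ y (EuclideanSpace.single i 1)) = _
  rw [clm_expand (fderiv ℝ f (φ y))]
  exact Finset.sum_congr rfl fun α _ => by rw [pd_coord hφ i α]; exact mul_comm _ _


theorem pd_fderiv {f : E n → ℝ} {p : E n} (hf : DifferentiableAt ℝ (fderiv ℝ f) p)
    (v w : E n) : fderiv ℝ (fun z => fderiv ℝ f z v) p w = fderiv ℝ (fderiv ℝ f) p w v := by
  have h : (fun z => fderiv ℝ f z v) =
      (ContinuousLinearMap.apply ℝ ℝ v) ∘ (fderiv ℝ f) := rfl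
  rw [h, fderiv_comp p (ContinuousLinearMap.apply ℝ ℝ v).differentiableAt hf,
    ContinuousLinearMap.fderiv]
  rfl

/-- Symmetry of second partial derivatives. -/
theorem pd_symm {V : Set (E n)} (hV : IsOpen V) {f : E n → ℝ}
    (hf : ContDiffOn ℝ ∞ f V) {p : E n} (hp : p ∈ V) (α β : Fin n) :
    pd β (pd α f) p = pd α (pd β f) p := by
  have hct : ContDiffAt ℝ ∞ f p := hf.contDiffAt (hV.mem_nhds hp)
  have hsym : IsSymmSndFDerivAt ℝ f p := hct.isSymmSndFDerivAt (by simp; exact ENat.LEInfty.out)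
  have hd : DifferentiableAt ℝ (fderiv ℝ f) p := by
    have h2 : ContDiffOn ℝ ∞ (fderiv ℝ f) V := hf.fderiv_of_isOpen hV (by simp)
    exact ((h2.differentiableOn (by simp)).differentiableAt (hV.mem_nhds hp))
  show fderiv ℝ (fun z => fderiv ℝ f z (EuclideanSpace.single α 1)) p (EuclideanSpace.single β 1)
      = fderiv ℝ (fun z => fderiv ℝ f z (EuclideanSpace.single β 1)) p (EuclideanSpace.single α 1)
  rw [pd_fderiv hd, pd_fderiv hd]
  exact hsym _ _


/-- The partial derivative of the Laplacian is the Laplacian of the partial derivative. -/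
theorem pd_lap_comm {V : Set (E n)} (hV : IsOpen V) {f : E n → ℝ}
    (hf : ContDiffOn ℝ ∞ f V) {p : E n} (hp : p ∈ V) (α : Fin n) :
    pd α (lap f) p = lap (pd α f) p := by
  rw [lap_eq_pd]
  have key : ∀ β : Fin n, pd β (pd β (pd α f)) p = pd α (fun z => pd β (pd β f) z) p := by
    intro β
    have h1 : ∀ y ∈ V, pd β (pd α f) y = pd α (pd β f) y :=
      fun y hy => pd_symm hV hf hy α β
    rw [pd_congr hV h1 hp β]
    exact (pd_symm hV (pd_smooth hV hf β) hp β α).symm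
  simp only [key]
  have h2 : ∀ y ∈ V, (∑ β, pd α (fun z => pd β (pd β f) z) y) =
      pd α (fun z => ∑ β, pd β (pd β f) z) y := by
    intro y hy
    exact (pd_sum Finset.univ
      (fun β _ => diffAt hV (pd_smooth hV (pd_smooth hV hf β) β) hy) α).symm
  rw [h2 p hp]
  rfl


theorem diffAt' {s : Set (E m)} (hs : IsOpen s) {φ : E m → E n} (hφ : ContDiffOn ℝ ∞ φ s)
    {x : E m} (hx : x ∈ s) : DifferentiableAt ℝ φ x :=
  ((hφ.differentiableOn (by simp)).differentiableAt (hs.mem_nhds hx))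

theorem coord_smooth {s : Set (E m)} {φ : E m → E n} (hφ : ContDiffOn ℝ ∞ φ s) (α : Fin n) :
    ContDiffOn ℝ ∞ (fun y => φ y α) s :=
  (EuclideanSpace.proj α : E n →L[ℝ] ℝ).contDiff.comp_contDiffOn hφ

/-- Second-order chain rule for the Laplacian. -/
theorem lap_comp {U : Set (E m)} {V : Set (E n)} (hU : IsOpen U) (hV : IsOpen V)
    {φ : E m → E n} (hφ : ContDiffOn ℝ ∞ φ U) {f : E n → ℝ} (hf : ContDiffOn ℝ ∞ f V)
    (hUV : U ⊆ φ ⁻¹' V) {x : E m} (hx : x ∈ U) :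
    lap (f ∘ φ) x =
      ∑ α, ∑ β, pd β (pd α f) (φ x) *
          ∑ i, pd i (fun z => φ z β) x * pd i (fun z => φ z α) x
        + ∑ α, pd α f (φ x) * lap (fun z => φ z α) x := by
  have hfV : ∀ α, ContDiffOn ℝ ∞ ((pd α f) ∘ φ) U :=
    fun α => ContDiffOn.comp (pd_smooth hV hf α) hφ hUV
  have hcoord : ∀ α, ContDiffOn ℝ ∞ (fun y => φ y α) U := coord_smooth hφ
  have key : ∀ i : Fin m, pd i (pd i (f ∘ φ)) x =
      ∑ α, ((∑ β, pd β (pd α f) (φ x) * pd i (fun z => φ z β) x) * pd i (fun z => φ z α) x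
        + pd α f (φ x) * pd i (pd i (fun z => φ z α)) x) := by
    intro i
    have h1 : ∀ y ∈ U, pd i (f ∘ φ) y =
        ∑ α, pd α f (φ y) * pd i (fun z => φ z α) y :=
      fun y hy => pd_comp (diffAt hV hf (hUV hy)) (diffAt' hU hφ hy) i
    rw [pd_congr hU h1 hx i]
    have hdm : ∀ α : Fin n, DifferentiableAt ℝ
        (fun y => pd α f (φ y) * pd i (fun z => φ z α) y) x :=
      fun α => (((diffAt hV (pd_smooth hV hf α) (hUV hx)).comp x (diffAt' hU hφ hx)).mul
        (diffAt hU (pd_smooth hU (hcoord α) i) hx))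
    rw [pd_sum (F := fun α y => pd α f (φ y) * pd i (fun z => φ z α) y)
      Finset.univ (fun α _ => hdm α) i]
    refine Finset.sum_congr rfl fun α _ => ?_
    have hmul := pd_mul (u := fun y => pd α f (φ y)) (v := fun y => pd i (fun z => φ z α) y)
      ((diffAt hV (pd_smooth hV hf α) (hUV hx)).comp x (diffAt' hU hφ hx))
      (diffAt hU (pd_smooth hU (hcoord α) i) hx) i
    rw [hmul]
    have h2 : pd i (fun y => pd α f (φ y)) x =
        ∑ β, pd β (pd α f) (φ x) * pd i (fun z => φ z β) x :=
      pd_comp (diffAt hV (pd_smooth hV hf α) (hUV hx)) (diffAt' hU hφ hx) i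
    rw [h2]
    ring
  rw [lap_eq_pd]
  simp only [key]
  rw [Finset.sum_comm, ← Finset.sum_add_distrib]
  refine Finset.sum_congr rfl fun α _ => ?_
  rw [Finset.sum_add_distrib]
  congr 1
  · simp only [Finset.sum_mul, Finset.mul_sum]
    rw [Finset.sum_comm]
    exact Finset.sum_congr rfl fun β _ => Finset.sum_congr rfl fun i _ => by ring
  · rw [lap_eq_pd, Finset.mul_sum]


/-- Chain rule for the Laplacian of a horizontally weakly conformal map. -/
theorem lap_comp_hwc {U : Set (E m)} {V : Set (E n)} (hU : IsOpen U) (hV : IsOpen V)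
    {φ : E m → E n} (hφ : ContDiffOn ℝ ∞ φ U) {f : E n → ℝ} (hf : ContDiffOn ℝ ∞ f V)
    (hUV : U ⊆ φ ⁻¹' V) {lam2 : E m → ℝ}
    (hG : ∀ y ∈ U, ∀ α β : Fin n,
      (∑ i, pd i (fun z => φ z α) y * pd i (fun z => φ z β) y) =
        lam2 y * (if α = β then 1 else 0))
    {x : E m} (hx : x ∈ U) :
    lap (f ∘ φ) x = lam2 x * lap f (φ x)
      + ∑ α, lap (fun z => φ z α) x * pd α f (φ x) := by
  rw [lap_comp hU hV hφ hf hUV hx]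
  congr 1
  · have h1 : ∀ α : Fin n,
        (∑ β, pd β (pd α f) (φ x) *
          ∑ i, pd i (fun z => φ z β) x * pd i (fun z => φ z α) x) =
        lam2 x * pd α (pd α f) (φ x) := by
      intro α
      have h2 : ∀ β : Fin n, (∑ i, pd i (fun z => φ z β) x * pd i (fun z => φ z α) x) =
          lam2 x * (if β = α then 1 else 0) := fun β => hG x hx β α
      simp only [h2]
      rw [Finset.sum_eq_single α (fun b _ hb => by simp [hb]) (fun h => absurd (Finset.mem_univ α) h)]
      simp [mul_comm]
    simp only [h1]
    rw [← Finset.mul_sum, lap_eq_pd]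
  · exact Finset.sum_congr rfl fun α _ => mul_comm _ _


theorem offdiag {U : Set (E m)} (hU : IsOpen U) {φ : E m → E n} (hφ : ContDiffOn ℝ ∞ φ U)
    {lam2 : E m → ℝ}
    (hG : ∀ y ∈ U, ∀ α β : Fin n,
      (∑ i, pd i (fun z => φ z α) y * pd i (fun z => φ z β) y) =
        lam2 y * (if α = β then 1 else 0))
    (hbi : ∀ α : Fin n, ∀ x ∈ U, lap (lap (fun y => φ y α)) x = 0)
    {α β : Fin n} (hne : α ≠ β)
    (hpr : ∀ x ∈ U, lap (lap (fun y => φ y α * φ y β)) x = 0)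
    {x : E m} (hx : x ∈ U) :
    lap (fun z => φ z α) x * lap (fun z => φ z β) x
      + (∑ i, pd i (fun z => φ z α) x * pd i (lap (fun z => φ z β)) x)
      + (∑ i, pd i (fun z => φ z β) x * pd i (lap (fun z => φ z α)) x) = 0 := by
  have hα := coord_smooth hφ α
  have hβ := coord_smooth hφ β
  have hlα := lap_smooth hU hα
  have hlβ := lap_smooth hU hβ
  have h1 : ∀ y ∈ U, lap (fun y => φ y α * φ y β) y =
      (fun y => φ y α * lap (fun z => φ z β) y + φ y β * lap (fun z => φ z α) y) y := by
    intro y hy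
    rw [lap_mul hU hα hβ hy, hG y hy α β, if_neg hne]
    ring
  have h2 := lap_congr hU h1 hx
  rw [hpr x hx] at h2
  rw [lap_add hU (hα.mul hlβ) (hβ.mul hlα) hx,
    lap_mul hU hα hlβ hx, lap_mul hU hβ hlα hx,
    hbi α x hx, hbi β x hx] at h2
  have h3 : lap (fun z => φ z α) x = lap (fun y => φ y α) x := rfl
  linarith [h2]

theorem diag_eq {U : Set (E m)} (hU : IsOpen U) {φ : E m → E n} (hφ : ContDiffOn ℝ ∞ φ U)
    {lam2 : E m → ℝ}
    (hG : ∀ y ∈ U, ∀ α β : Fin n,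
      (∑ i, pd i (fun z => φ z α) y * pd i (fun z => φ z β) y) =
        lam2 y * (if α = β then 1 else 0))
    (hbi : ∀ α : Fin n, ∀ x ∈ U, lap (lap (fun y => φ y α)) x = 0)
    {α β : Fin n}
    (hpr : ∀ x ∈ U, lap (lap (fun y => (φ y α) ^ 2 - (φ y β) ^ 2)) x = 0)
    {x : E m} (hx : x ∈ U) :
    (lap (fun z => φ z α) x) ^ 2
        + 2 * ∑ i, pd i (fun z => φ z α) x * pd i (lap (fun z => φ z α)) x
      = (lap (fun z => φ z β) x) ^ 2
        + 2 * ∑ i, pd i (fun z => φ z β) x * pd i (lap (fun z => φ z β)) x := by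
  have hα := coord_smooth hφ α
  have hβ := coord_smooth hφ β
  have hlα := lap_smooth hU hα
  have hlβ := lap_smooth hU hβ
  have hsqα : ∀ y ∈ U, lap (fun z => (φ z α) ^ 2) y =
      2 * (φ y α * lap (fun z => φ z α) y) + 2 * lam2 y := by
    intro y hy
    have he : (fun z => (φ z α) ^ 2) = (fun z => φ z α * φ z α) := by
      funext z; ring
    rw [he, lap_mul hU hα hα hy, hG y hy α α, if_pos rfl]
    ring
  have hsqβ : ∀ y ∈ U, lap (fun z => (φ z β) ^ 2) y =
      2 * (φ y β * lap (fun z => φ z β) y) + 2 * lam2 y := by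
    intro y hy
    have he : (fun z => (φ z β) ^ 2) = (fun z => φ z β * φ z β) := by
      funext z; ring
    rw [he, lap_mul hU hβ hβ hy, hG y hy β β, if_pos rfl]
    ring
  have h1 : ∀ y ∈ U, lap (fun y => (φ y α) ^ 2 - (φ y β) ^ 2) y =
      (fun y => 2 * (φ y α * lap (fun z => φ z α) y)
        - 2 * (φ y β * lap (fun z => φ z β) y)) y := by
    intro y hy
    have hsm : ∀ γ : Fin n, ContDiffOn ℝ ∞ (fun z => (φ z γ) ^ 2) U := by
      intro γ
      have he : (fun z => (φ z γ) ^ 2) = (fun z => φ z γ * φ z γ) := by funext z; ring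
      rw [he]; exact (coord_smooth hφ γ).mul (coord_smooth hφ γ)
    rw [lap_sub hU (hsm α) (hsm β) hy, hsqα y hy, hsqβ y hy]
    ring
  have h2 := lap_congr hU h1 hx
  rw [hpr x hx] at h2
  rw [lap_sub hU ((contDiffOn_const.mul (hα.mul hlα)))
      ((contDiffOn_const.mul (hβ.mul hlβ))) hx,
    lap_const_mul hU (hα.mul hlα) hx 2, lap_const_mul hU (hβ.mul hlβ) hx 2,
    lap_mul hU hα hlα hx, lap_mul hU hβ hlβ hx, hbi α x hx, hbi β x hx] at h2
  nlinarith [h2]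


theorem final_algebra {n : ℕ} [NeZero n] (l2 B Λ L : ℝ) (A d g : Fin n → ℝ)
    (H Q : Fin n → Fin n → ℝ)
    (hL : L = ∑ γ, H γ γ)
    (Hsymm : ∀ γ δ, H γ δ = H δ γ)
    (hoff : ∀ γ δ, γ ≠ δ → A γ * A δ + Q γ δ + Q δ γ = 0)
    (hdiag : ∀ γ, A γ ^ 2 + 2 * Q γ γ = A 0 ^ 2 + 2 * Q 0 0) :
    l2 * (l2 * B + ∑ γ, A γ * d γ) + 2 * (∑ γ, d γ * g γ) + L * Λ
      + (∑ γ, (A γ * (l2 * d γ + ∑ δ, A δ * H γ δ) + 2 * (∑ δ, H γ δ * Q δ γ)))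
    = l2 ^ 2 * B + 2 * (∑ γ, (l2 * A γ + g γ) * d γ) + (Λ + 2 * Q 0 0 + A 0 ^ 2) * L := by
  have k2 : (∑ γ, ∑ δ, H γ δ * Q δ γ) = ∑ γ, ∑ δ, H γ δ * Q γ δ := by
    rw [Finset.sum_comm]
    exact Finset.sum_congr rfl fun γ _ => Finset.sum_congr rfl fun δ _ => by rw [Hsymm δ γ]
  have k1 : (∑ γ, ∑ δ, H γ δ * (A γ * A δ + Q γ δ + Q δ γ))
      = (A 0 ^ 2 + 2 * Q 0 0) * ∑ γ, H γ γ := by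
    rw [Finset.mul_sum]
    refine Finset.sum_congr rfl fun γ _ => ?_
    rw [Finset.sum_eq_single γ
      (fun δ _ hδ => by rw [hoff γ δ (fun h => hδ (h.symm)), mul_zero])
      (fun h => absurd (Finset.mem_univ γ) h)]
    calc H γ γ * (A γ * A γ + Q γ γ + Q γ γ) = (A γ ^ 2 + 2 * Q γ γ) * H γ γ := by ring
      _ = (A 0 ^ 2 + 2 * Q 0 0) * H γ γ := by rw [hdiag γ]
  have k4 : (∑ γ, (A γ * (l2 * d γ + ∑ δ, A δ * H γ δ) + 2 * (∑ δ, H γ δ * Q δ γ)))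
      = l2 * (∑ γ, A γ * d γ) + (∑ γ, ∑ δ, H γ δ * (A γ * A δ + Q γ δ + Q δ γ)) := by
    have e1 : ∀ γ : Fin n, A γ * (∑ δ, A δ * H γ δ) = ∑ δ, H γ δ * (A γ * A δ) := by
      intro γ
      rw [Finset.mul_sum]
      exact Finset.sum_congr rfl fun δ _ => by ring
    calc (∑ γ, (A γ * (l2 * d γ + ∑ δ, A δ * H γ δ) + 2 * (∑ δ, H γ δ * Q δ γ)))
        = ∑ γ, (l2 * (A γ * d γ)
            + ((∑ δ, H γ δ * (A γ * A δ)) + 2 * (∑ δ, H γ δ * Q δ γ))) := by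
          refine Finset.sum_congr rfl fun γ _ => ?_
          rw [mul_add, e1 γ]
          ring
      _ = (∑ γ, l2 * (A γ * d γ))
            + ((∑ γ, ∑ δ, H γ δ * (A γ * A δ)) + (∑ γ, 2 * ∑ δ, H γ δ * Q δ γ)) := by
          rw [Finset.sum_add_distrib, Finset.sum_add_distrib]
      _ = l2 * (∑ γ, A γ * d γ)
            + ((∑ γ, ∑ δ, H γ δ * (A γ * A δ))
              + ((∑ γ, ∑ δ, H γ δ * Q γ δ) + (∑ γ, ∑ δ, H γ δ * Q δ γ))) := by
          rw [← Finset.mul_sum, ← Finset.mul_sum, two_mul]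
          nth_rewrite 2 [k2]
          ring
      _ = l2 * (∑ γ, A γ * d γ)
            + (∑ γ, ((∑ δ, H γ δ * (A γ * A δ))
              + ((∑ δ, H γ δ * Q γ δ) + (∑ δ, H γ δ * Q δ γ)))) := by
          rw [Finset.sum_add_distrib, Finset.sum_add_distrib]
      _ = l2 * (∑ γ, A γ * d γ) + (∑ γ, ∑ δ, H γ δ * (A γ * A δ + Q γ δ + Q δ γ)) := by
          congr 1
          refine Finset.sum_congr rfl fun γ _ => ?_
          rw [← Finset.sum_add_distrib, ← Finset.sum_add_distrib]
          exact Finset.sum_congr rfl fun δ _ => by ring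
  have e3 : (∑ γ, (l2 * A γ + g γ) * d γ)
      = l2 * (∑ γ, A γ * d γ) + ∑ γ, d γ * g γ := by
    rw [Finset.mul_sum, ← Finset.sum_add_distrib]
    exact Finset.sum_congr rfl fun γ _ => by ring
  rw [k4, k1, hL, e3]
  ring


/-- Lambda-form variants (definitionally equal restatements). -/
theorem pd_comp' (f : E n → ℝ) (φ : E m → E n) {y : E m}
    (hf : DifferentiableAt ℝ f (φ y)) (hφ : DifferentiableAt ℝ φ y) (i : Fin m) :
    pd i (fun z => f (φ z)) y = ∑ α, pd α f (φ y) * pd i (fun z => φ z α) y :=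
  pd_comp hf hφ i

theorem lap_comp_hwc' {U : Set (E m)} {V : Set (E n)} (hU : IsOpen U) (hV : IsOpen V)
    (φ : E m → E n) (hφ : ContDiffOn ℝ ∞ φ U) (f : E n → ℝ) (hf : ContDiffOn ℝ ∞ f V)
    (hUV : U ⊆ φ ⁻¹' V) {lam2 : E m → ℝ}
    (hG : ∀ y ∈ U, ∀ α β : Fin n,
      (∑ i, pd i (fun z => φ z α) y * pd i (fun z => φ z β) y) =
        lam2 y * (if α = β then 1 else 0))
    {x : E m} (hx : x ∈ U) :
    lap (fun z => f (φ z)) x = lam2 x * lap f (φ x)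
      + ∑ α, lap (fun z => φ z α) x * pd α f (φ x) :=
  lap_comp_hwc hU hV hφ hf hUV hG hx

theorem comp_smooth' {U : Set (E m)} {V : Set (E n)} {φ : E m → E n}
    (hφ : ContDiffOn ℝ ∞ φ U) {f : E n → ℝ} (hf : ContDiffOn ℝ ∞ f V)
    (hUV : U ⊆ φ ⁻¹' V) : ContDiffOn ℝ ∞ (fun z => f (φ z)) U :=
  ContDiffOn.comp hf hφ hUV

end S5


open S5 in
private theorem stmt_5_aux {m n : ℕ} [NeZero n] (U : Set (E m)) (hU : IsOpen U)
    (φ : E m → E n) (hφ : ContDiffOn ℝ (⊤ : ℕ∞) φ U)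
    (lam : E m → ℝ)
    (hlam2smooth : ContDiffOn ℝ (⊤ : ℕ∞) (fun x => (lam x) ^ 2) U)
    (hHWC : ∀ x ∈ U, ∀ α β : Fin n,
      ⟪gradient (fun y => φ y α) x, gradient (fun y => φ y β) x⟫ =
        (lam x) ^ 2 * (if α = β then 1 else 0))
    (hbi : ∀ α : Fin n, ∀ x ∈ U, lap (lap (fun y => φ y α)) x = 0)
    (hprod : ∀ α β : Fin n, α ≠ β →
      (∀ x ∈ U, lap (lap (fun y => φ y α * φ y β)) x = 0) ∧
      (∀ x ∈ U, lap (lap (fun y => (φ y α) ^ 2 - (φ y β) ^ 2)) x = 0))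
    (V : Set (E n)) (hV : IsOpen V) (f : E n → ℝ) (hf : ContDiffOn ℝ (⊤ : ℕ∞) f V) :
    ∀ x ∈ U ∩ φ ⁻¹' V,
      lap (lap (f ∘ φ)) x =
        (lam x) ^ 4 * lap (lap f) (φ x)
        + 2 * ∑ α : Fin n,
            ((lam x) ^ 2 * lap (fun y => φ y α) x +
              ⟪gradient (fun y => (lam y) ^ 2) x, gradient (fun y => φ y α) x⟫) *
            fderiv ℝ (lap f) (φ x) (EuclideanSpace.single α 1)
        + (lap (fun y => (lam y) ^ 2) x +
            2 * ⟪gradient (fun y => φ y 0) x,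
                  gradient (lap (fun y => φ y 0)) x⟫ +
            (lap (fun y => φ y 0) x) ^ 2) * lap f (φ x) := by
  intro x hx
  obtain ⟨hxU, hxV⟩ := hx
  have hφ' : ContDiffOn ℝ ∞ φ U := hφ.of_le (by simp)
  have hf' : ContDiffOn ℝ ∞ f V := hf.of_le (by simp)
  have hlam2 : ContDiffOn ℝ ∞ (fun y => lam y ^ 2) U := hlam2smooth.of_le (by simp)
  set W : Set (E m) := U ∩ φ ⁻¹' V with hWdef
  have hW : IsOpen W := hφ'.continuousOn.isOpen_inter_preimage hU hV
  have hφW : ContDiffOn ℝ ∞ φ W := hφ'.mono Set.inter_subset_left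
  have hWV : W ⊆ φ ⁻¹' V := Set.inter_subset_right
  have hxW : x ∈ W := ⟨hxU, hxV⟩
  -- HWC in coordinate-sum form
  have hG : ∀ y ∈ U, ∀ α β : Fin n,
      (∑ i, pd i (fun z => φ z α) y * pd i (fun z => φ z β) y) =
        (fun y => lam y ^ 2) y * (if α = β then 1 else 0) := by
    intro y hy α β
    rw [← inner_grad_grad]
    exact hHWC y hy α β
  have hGW : ∀ y ∈ W, ∀ α β : Fin n,
      (∑ i, pd i (fun z => φ z α) y * pd i (fun z => φ z β) y) =
        (fun y => lam y ^ 2) y * (if α = β then 1 else 0) :=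
    fun y hy => hG y hy.1
  -- abbreviations (as plain defs via have-lets are avoided; we inline)
  -- smoothness of building blocks on W
  have slam2 : ContDiffOn ℝ ∞ (fun y => lam y ^ 2) W := hlam2.mono Set.inter_subset_left
  have hlapf : ContDiffOn ℝ ∞ (lap f) V := lap_smooth hV hf'
  have sh : ContDiffOn ℝ ∞ (fun y => lap f (φ y)) W := comp_smooth' hφW hlapf hWV
  have scoordU : ∀ γ : Fin n, ContDiffOn ℝ ∞ (fun z => φ z γ) U := coord_smooth hφ'
  have slapφ : ∀ γ : Fin n, ContDiffOn ℝ ∞ (lap (fun z => φ z γ)) W :=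
    fun γ => (lap_smooth hU (scoordU γ)).mono Set.inter_subset_left
  have sv : ∀ γ : Fin n, ContDiffOn ℝ ∞ (fun y => pd γ f (φ y)) W :=
    fun γ => comp_smooth' hφW (pd_smooth hV hf' γ) hWV
  -- Step 1: first application of the chain rule, as an identity on W
  have hE1 : ∀ y ∈ W, lap (f ∘ φ) y =
      (fun y => (lam y ^ 2) * lap f (φ y)
        + ∑ γ, lap (fun z => φ z γ) y * pd γ f (φ y)) y :=
    fun y hy => lap_comp_hwc hW hV hφW hf' hWV hGW hy
  have step2 : lap (lap (f ∘ φ)) x =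
      lap (fun y => (lam y ^ 2) * lap f (φ y)
        + ∑ γ, lap (fun z => φ z γ) y * pd γ f (φ y)) x :=
    lap_congr hW hE1 hxW
  -- Step 3: split the Laplacian of the sum
  have step3 : lap (fun y => (lam y ^ 2) * lap f (φ y)
        + ∑ γ, lap (fun z => φ z γ) y * pd γ f (φ y)) x =
      lap (fun y => (lam y ^ 2) * lap f (φ y)) x
        + ∑ γ, lap (fun y => lap (fun z => φ z γ) y * pd γ f (φ y)) x := by
    rw [lap_add hW (slam2.mul sh)
      (ContDiffOn.sum (fun γ _ => (slapφ γ).mul (sv γ))) hxW]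
    congr 1
    exact lap_sum hW Finset.univ (fun γ _ => (slapφ γ).mul (sv γ)) hxW
  -- T1 : Laplacian of λ² · (Δf)∘φ
  have step6 : lap (fun y => lap f (φ y)) x =
      (lam x ^ 2) * lap (lap f) (φ x)
        + ∑ γ, lap (fun z => φ z γ) x * pd γ (lap f) (φ x) :=
    lap_comp_hwc' hW hV φ hφW (lap f) hlapf hWV hGW hxW
  have step7 : ∀ i : Fin m, pd i (fun y => lap f (φ y)) x =
      ∑ γ, pd γ (lap f) (φ x) * pd i (fun z => φ z γ) x :=
    fun i => pd_comp' (lap f) φ (diffAt hV hlapf hxV) (diffAt' hW hφW hxW) i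
  have step8 : (∑ i, pd i (fun y => lam y ^ 2) x * pd i (fun y => lap f (φ y)) x) =
      ∑ γ, pd γ (lap f) (φ x) *
        (∑ i, pd i (fun y => lam y ^ 2) x * pd i (fun z => φ z γ) x) := by
    simp only [step7, Finset.mul_sum]
    rw [Finset.sum_comm]
    exact Finset.sum_congr rfl fun γ _ => Finset.sum_congr rfl fun i _ => by ring
  have T1 : lap (fun y => (lam y ^ 2) * lap f (φ y)) x =
      (lam x ^ 2) * ((lam x ^ 2) * lap (lap f) (φ x)
          + ∑ γ, lap (fun z => φ z γ) x * pd γ (lap f) (φ x))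
        + 2 * (∑ γ, pd γ (lap f) (φ x) *
            (∑ i, pd i (fun y => lam y ^ 2) x * pd i (fun z => φ z γ) x))
        + lap f (φ x) * lap (fun y => lam y ^ 2) x := by
    rw [lap_mul hW slam2 sh hxW, step6, step8]
  -- T2 : Laplacian of (Δφ^γ) · (∂γ f)∘φ
  have T2 : ∀ γ : Fin n, lap (fun y => lap (fun z => φ z γ) y * pd γ f (φ y)) x =
      lap (fun z => φ z γ) x * ((lam x ^ 2) * pd γ (lap f) (φ x)
          + ∑ δ, lap (fun z => φ z δ) x * pd δ (pd γ f) (φ x))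
        + 2 * (∑ δ, pd δ (pd γ f) (φ x) *
            (∑ i, pd i (fun z => φ z δ) x * pd i (lap (fun z => φ z γ)) x)) := by
    intro γ
    have hmul := lap_mul hW (slapφ γ) (sv γ) hxW
    have step10 : lap (fun y => pd γ f (φ y)) x =
        (lam x ^ 2) * pd γ (lap f) (φ x)
          + ∑ δ, lap (fun z => φ z δ) x * pd δ (pd γ f) (φ x) := by
      rw [lap_comp_hwc' hW hV φ hφW (pd γ f) (pd_smooth hV hf' γ) hWV hGW hxW,
        ← pd_lap_comm hV hf' hxV γ]
    have step12 : ∀ i : Fin m, pd i (fun y => pd γ f (φ y)) x =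
        ∑ δ, pd δ (pd γ f) (φ x) * pd i (fun z => φ z δ) x :=
      fun i => pd_comp' (pd γ f) φ (diffAt hV (pd_smooth hV hf' γ) hxV)
        (diffAt' hW hφW hxW) i
    have step13 : (∑ i, pd i (lap (fun z => φ z γ)) x * pd i (fun y => pd γ f (φ y)) x) =
        ∑ δ, pd δ (pd γ f) (φ x) *
          (∑ i, pd i (fun z => φ z δ) x * pd i (lap (fun z => φ z γ)) x) := by
      simp only [step12, Finset.mul_sum]
      rw [Finset.sum_comm]
      exact Finset.sum_congr rfl fun δ _ => Finset.sum_congr rfl fun i _ => by ring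
    rw [hmul, step10, step13, hbi γ x hxU]
    ring
  -- the algebraic identities coming from biharmonicity of the products
  have hLe : lap f (φ x) = ∑ γ, pd γ (pd γ f) (φ x) := lap_eq_pd f (φ x)
  have Hsymm : ∀ γ δ : Fin n, pd δ (pd γ f) (φ x) = pd γ (pd δ f) (φ x) :=
    fun γ δ => pd_symm hV hf' hxV γ δ
  have hoff : ∀ γ δ : Fin n, γ ≠ δ →
      lap (fun z => φ z γ) x * lap (fun z => φ z δ) x
        + (∑ i, pd i (fun z => φ z γ) x * pd i (lap (fun z => φ z δ)) x)
        + (∑ i, pd i (fun z => φ z δ) x * pd i (lap (fun z => φ z γ)) x) = 0 :=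
    fun γ δ hne => offdiag hU hφ' hG hbi hne (hprod γ δ hne).1 hxU
  have hdiag : ∀ γ : Fin n,
      (lap (fun z => φ z γ) x) ^ 2
          + 2 * (∑ i, pd i (fun z => φ z γ) x * pd i (lap (fun z => φ z γ)) x)
        = (lap (fun z => φ z 0) x) ^ 2
          + 2 * (∑ i, pd i (fun z => φ z 0) x * pd i (lap (fun z => φ z 0)) x) := by
    intro γ
    by_cases hγ : γ = 0
    · subst hγ; rfl
    · exact diag_eq hU hφ' hG hbi (hprod γ 0 hγ).2 hxU
  have final :
      (lam x ^ 2) * ((lam x ^ 2) * lap (lap f) (φ x)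
            + ∑ γ, lap (fun z => φ z γ) x * pd γ (lap f) (φ x))
          + 2 * (∑ γ, pd γ (lap f) (φ x) *
              (∑ i, pd i (fun y => lam y ^ 2) x * pd i (fun z => φ z γ) x))
          + lap f (φ x) * lap (fun y => lam y ^ 2) x
          + (∑ γ, (lap (fun z => φ z γ) x * ((lam x ^ 2) * pd γ (lap f) (φ x)
                + ∑ δ, lap (fun z => φ z δ) x * pd δ (pd γ f) (φ x))
              + 2 * (∑ δ, pd δ (pd γ f) (φ x) *
                  (∑ i, pd i (fun z => φ z δ) x * pd i (lap (fun z => φ z γ)) x))))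
        = (lam x ^ 2) ^ 2 * lap (lap f) (φ x)
          + 2 * (∑ γ, ((lam x ^ 2) * lap (fun z => φ z γ) x
              + (∑ i, pd i (fun y => lam y ^ 2) x * pd i (fun z => φ z γ) x))
                * pd γ (lap f) (φ x))
          + (lap (fun y => lam y ^ 2) x
              + 2 * (∑ i, pd i (fun z => φ z 0) x * pd i (lap (fun z => φ z 0)) x)
              + (lap (fun z => φ z 0) x) ^ 2) * lap f (φ x) :=
    final_algebra (lam x ^ 2) (lap (lap f) (φ x)) (lap (fun y => lam y ^ 2) x)
      (lap f (φ x))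
      (fun γ => lap (fun z => φ z γ) x)
      (fun γ => pd γ (lap f) (φ x))
      (fun γ => ∑ i, pd i (fun y => lam y ^ 2) x * pd i (fun z => φ z γ) x)
      (fun γ δ => pd δ (pd γ f) (φ x))
      (fun γ δ => ∑ i, pd i (fun z => φ z γ) x * pd i (lap (fun z => φ z δ)) x)
      hLe Hsymm hoff hdiag
  rw [step2, step3, T1]
  simp only [T2]
  rw [final]
  have h4 : lam x ^ 4 = (lam x ^ 2) ^ 2 := by ring
  rw [h4]
  simp only [inner_grad_grad]
  have hpd : ∀ γ : Fin n, fderiv ℝ (lap f) (φ x) (EuclideanSpace.single γ 1)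
      = pd γ (lap f) (φ x) := fun γ => rfl
  simp only [hpd]

/-- the key bi-Laplacian identity.  If `φ : U → ℝⁿ` is horizontally
weakly conformal with dilation `λ` (with `λ² = |∇φ^1|²` smooth), each component is
biharmonic, and `φ^α·φ^β`, `(φ^α)² − (φ^β)²` are biharmonic for all `α ≠ β`, then for
every smooth `f` on an open `V ⊆ ℝⁿ`, on `φ⁻¹(V)` one has
`Δ²(f∘φ) = λ⁴ (Δ²f)∘φ + 2 Σ_α [λ² Δφ^α + ⟨∇λ², ∇φ^α⟩] (∂_α Δf)∘φ
  + [Δλ² + 2⟨∇φ^1, ∇Δφ^1⟩ + (Δφ^1)²] (Δf)∘φ`. -/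
theorem stmt_5 {m n : ℕ} [NeZero n] (U : Set (E m)) (hU : IsOpen U)
    (φ : E m → E n) (hφ : ContDiffOn ℝ (⊤ : ℕ∞) φ U)
    (lam : E m → ℝ) (hlam0 : ∀ x, 0 ≤ lam x)
    (hlam2smooth : ContDiffOn ℝ (⊤ : ℕ∞) (fun x => (lam x) ^ 2) U)
    (hdil : ∀ x ∈ U, (lam x) ^ 2 = ‖gradient (fun y => φ y 0) x‖ ^ 2)
    (hHWC : ∀ x ∈ U, ∀ α β : Fin n,
      ⟪gradient (fun y => φ y α) x, gradient (fun y => φ y β) x⟫ =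
        (lam x) ^ 2 * (if α = β then 1 else 0))
    (hbi : ∀ α : Fin n, ∀ x ∈ U, lap (lap (fun y => φ y α)) x = 0)
    (hprod : ∀ α β : Fin n, α ≠ β →
      (∀ x ∈ U, lap (lap (fun y => φ y α * φ y β)) x = 0) ∧
      (∀ x ∈ U, lap (lap (fun y => (φ y α) ^ 2 - (φ y β) ^ 2)) x = 0))
    (V : Set (E n)) (hV : IsOpen V) (f : E n → ℝ) (hf : ContDiffOn ℝ (⊤ : ℕ∞) f V) :
    ∀ x ∈ U ∩ φ ⁻¹' V,
      lap (lap (f ∘ φ)) x =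
        (lam x) ^ 4 * lap (lap f) (φ x)
        + 2 * ∑ α : Fin n,
            ((lam x) ^ 2 * lap (fun y => φ y α) x +
              ⟪gradient (fun y => (lam y) ^ 2) x, gradient (fun y => φ y α) x⟫) *
            fderiv ℝ (lap f) (φ x) (EuclideanSpace.single α 1)
        + (lap (fun y => (lam y) ^ 2) x +
            2 * ⟪gradient (fun y => φ y 0) x,
                  gradient (lap (fun y => φ y 0)) x⟫ +
            (lap (fun y => φ y 0) x) ^ 2) * lap f (φ x) := by
  exact stmt_5_aux U hU φ hφ lam hlam2smooth hHWC hbi hprod V hV f hf
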